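/- arXiv:2201.07287 — 6 statements merged into one kernel-verified Lean document; each statement's English description precedes it below -/
import Mathlib

section
/- For every index i with 1 ≤ i ≤ 2^n, the size of the leaf set of the unique stopping tree rooted at variable node v_{1,i} in the polar code factor graph G_{2^n} equals the i-th entry of the vector T_{2^n} = T_2^{⊗n}, where T_2 = (1, 2)^T and ⊗n denotes the n-th Kronecker power. -/
/-!
Index rows from `0` and write them in binary. The checks between columns `k` and `k + 1` link
row `a` to row `a + 2^(n-k)` when bit `n - k` of `a` is clear. Propagating the stopping condition
from the root `b` one column at a time shows that column `k` of a stopping tree rooted at `b`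
consists exactly of the numbers obtained from `b` by clearing some of its `1`-bits in positions
`≥ n + 1 - k`. So the tree is unique and its leaves are the submasks of `b`; splitting them on the
top bit gives the recursion that defines the entries of `T₂^{⊗n}`.
-/

/-- Neighbors (variable nodes `(column, row)`, 1-indexed) of the check node `c_{k,i}`
in the polar factor graph `G_{2^n}` of `F₂^{⊗n}`.  In stage `k`, rows are grouped in
blocks of size `2^(n-k+1)`; a check in the top half of its block has degree 3
(with a slanted edge to row `i + 2^(n-k)`), one in the bottom half has degree 2. -/
def chkNbrs (n k i : ℕ) : Finset (ℕ × ℕ) :=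
  if (i - 1) % 2 ^ (n - k + 1) < 2 ^ (n - k) then
    {(k, i), (k + 1, i), (k + 1, i + 2 ^ (n - k))}
  else
    {(k, i), (k + 1, i)}

/-- `c_{k,i}` is a check node of `G_{2^n}`. -/
def IsCheck (n k i : ℕ) : Prop := 1 ≤ k ∧ k ≤ n ∧ 1 ≤ i ∧ i ≤ 2 ^ n

/-- `v_{k,i}` is a variable node of `G_{2^n}`. -/
def IsVN (n k i : ℕ) : Prop := 1 ≤ k ∧ k ≤ n + 1 ∧ 1 ≤ i ∧ i ≤ 2 ^ n

/-- A stopping set of `G_{2^n}`: a set of variable nodes such that every check node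
adjacent to the set has at least two neighbors in the set. -/
def IsStoppingSet (n : ℕ) (ψ : Finset (ℕ × ℕ)) : Prop :=
  (∀ v ∈ ψ, IsVN n v.1 v.2) ∧
  ∀ k i, IsCheck n k i → (∃ v ∈ chkNbrs n k i, v ∈ ψ) →
    2 ≤ ((chkNbrs n k i) ∩ ψ).card

/-- The leaf set of a stopping set: its variable nodes in the rightmost column. -/
def leafSet (n : ℕ) (ψ : Finset (ℕ × ℕ)) : Finset (ℕ × ℕ) :=
  ψ.filter fun v => v.1 = n + 1

/-- A stopping tree rooted at `v_{1,i}`: a stopping set whose only variable node in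
the leftmost column is `v_{1,i}`. -/
def IsStoppingTree (n i : ℕ) (ψ : Finset (ℕ × ℕ)) : Prop :=
  IsStoppingSet n ψ ∧ ψ.filter (fun v => v.1 = 1) = {(1, i)}

/-- `Tvec n i` is the `i`-th (1-indexed) entry of `T₂^{⊗n}` where `T₂ = (1,2)ᵀ`. -/
def Tvec : ℕ → ℕ → ℕ
  | 0, _ => 1
  | n + 1, i => if i ≤ 2 ^ n then Tvec n i else 2 * Tvec n (i - 2 ^ n)

namespace Nat

theorem mod_two_pow_succ_lt_iff {a s : ℕ} : a % 2 ^ (s + 1) < 2 ^ s ↔ a.testBit s = false := by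
  have hlow : a % 2 ^ s < 2 ^ s := mod_lt _ (by positivity)
  rw [mod_pow_succ, testBit_eq_decide_div_mod_eq, decide_eq_false_iff_not]
  rcases mod_two_eq_zero_or_one (a / 2 ^ s) with h | h <;> simp [h, hlow]

theorem add_two_pow_eq_or {a s : ℕ} (h : a.testBit s = false) : a + 2 ^ s = a ||| 2 ^ s := by
  have hr : a % 2 ^ (s + 1) < 2 ^ s := mod_two_pow_succ_lt_iff.2 h
  have hr' : a % 2 ^ (s + 1) + 2 ^ s < 2 ^ (s + 1) := by have := pow_succ 2 s; omega
  calc a + 2 ^ s = 2 ^ (s + 1) * (a / 2 ^ (s + 1)) + (a % 2 ^ (s + 1) + 2 ^ s) := by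
        rw [← add_assoc, div_add_mod]
    _ = 2 ^ (s + 1) * (a / 2 ^ (s + 1)) ||| (a % 2 ^ (s + 1) ||| 2 ^ s) := by
        rw [two_pow_add_eq_or_of_lt hr', or_two_pow_eq_add_of_lt hr]
    _ = a ||| 2 ^ s := by
        rw [← Nat.or_assoc, ← two_pow_add_eq_or_of_lt (mod_lt _ (by positivity)),
          div_add_mod]

theorem testBit_add_two_pow_self {a s : ℕ} (ha : a.testBit s = false) :
    (a + 2 ^ s).testBit s := by
  simp [add_two_pow_eq_or ha]

end Nat

theorem Finset.two_le_card_pair_inter_iff {α : Type*} [DecidableEq α] {x y : α}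
    {s : Finset α} (hxy : x ≠ y) : 2 ≤ (({x, y} : Finset α) ∩ s).card ↔ x ∈ s ∧ y ∈ s := by
  by_cases hx : x ∈ s <;> by_cases hy : y ∈ s <;>
    simp [Finset.insert_inter_of_mem, Finset.insert_inter_of_notMem, hx, hy, hxy]

theorem Finset.two_le_card_triple_inter_iff {α : Type*} [DecidableEq α] {x y z : α}
    {s : Finset α} (hxy : x ≠ y) (hxz : x ≠ z) (hyz : y ≠ z) :
    2 ≤ (({x, y, z} : Finset α) ∩ s).card ↔ x ∈ s ∧ y ∈ s ∨ x ∈ s ∧ z ∈ s ∨ y ∈ s ∧ z ∈ s := by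
  by_cases hx : x ∈ s <;> by_cases hy : y ∈ s <;> by_cases hz : z ∈ s <;>
    simp [Finset.insert_inter_of_mem, Finset.insert_inter_of_notMem, hx, hy, hz, hxy, hxz, hyz]

def IsHighSubmask (r b a : ℕ) : Prop :=
  ∀ t, a.testBit t = b.testBit t ∨ (r ≤ t ∧ a.testBit t = false)

namespace IsHighSubmask

variable {r s b a : ℕ}

theorem refl (r b : ℕ) : IsHighSubmask r b b := fun _ => Or.inl rfl

theorem testBit_of_testBit (h : IsHighSubmask r b a) {t : ℕ} (ht : a.testBit t) : b.testBit t := by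
  rcases h t with h | ⟨-, h⟩ <;> simp_all

theorem le (h : IsHighSubmask r b a) : a ≤ b := Nat.le_of_testBit fun _ => h.testBit_of_testBit

theorem succ_iff : IsHighSubmask (s + 1) b a ↔ IsHighSubmask s b a ∧ a.testBit s = b.testBit s := by
  refine ⟨fun h => ⟨fun t => (h t).imp_right fun ht => ⟨by omega, ht.2⟩, ?_⟩, fun ⟨h, hs⟩ t => ?_⟩
  · rcases h s with h | ⟨h, -⟩
    · exact h
    · omega
  · rcases (h t) with h | ⟨ht, h⟩
    · exact Or.inl h
    · rcases ht.eq_or_lt with rfl | ht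
      · exact Or.inl hs
      · exact Or.inr ⟨ht, h⟩

theorem or_two_pow_iff (hrs : r ≤ s) :
    IsHighSubmask r b (a ||| 2 ^ s) ↔ IsHighSubmask r b a ∧ b.testBit s := by
  refine ⟨fun h => ⟨fun t => ?_, ?_⟩, fun ⟨h, hs⟩ t => ?_⟩
  · by_cases hts : t = s
    · subst hts
      have := h t
      cases ha : a.testBit t <;> simp_all
    · simpa [Ne.symm hts] using h t
  · exact h.testBit_of_testBit (by simp)
  · by_cases hts : t = s
    · subst hts; simp [hs]
    · simpa [Ne.symm hts] using h t

theorem iff_eq {n : ℕ} (hb : b < 2 ^ n) : IsHighSubmask n b a ↔ a = b := by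
  refine ⟨fun h => Nat.eq_of_testBit_eq fun t => ?_, fun h => h ▸ refl n b⟩
  rcases h t with h | ⟨ht, h⟩
  · exact h
  · rw [h, Nat.testBit_lt_two_pow (hb.trans_le (Nat.pow_le_pow_right two_pos ht))]

theorem zero_iff_mod_two_pow {n : ℕ} (ha : a < 2 ^ n) :
    IsHighSubmask 0 b a ↔ IsHighSubmask 0 (b % 2 ^ n) a := by
  refine forall_congr' fun t => ?_
  by_cases htn : t < n
  · simp [htn]
  · have : a.testBit t = false :=
      Nat.testBit_lt_two_pow (ha.trans_le (Nat.pow_le_pow_right two_pos (by omega)))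
    simp [this]

theorem succ_iff_of_testBit (ha : a.testBit s) :
    IsHighSubmask (s + 1) b a ↔ IsHighSubmask s b a := by
  rw [succ_iff, and_iff_left_iff_imp]
  exact fun h => by rw [ha, h.testBit_of_testBit ha]

theorem succ_iff_of_not_testBit (ha : a.testBit s = false) :
    IsHighSubmask (s + 1) b a ↔ IsHighSubmask s b a ∧ b.testBit s = false := by
  rw [succ_iff, ha, eq_comm]

theorem add_two_pow_iff (ha : a.testBit s = false) :
    IsHighSubmask s b (a + 2 ^ s) ↔ IsHighSubmask s b a ∧ b.testBit s := by
  rw [Nat.add_two_pow_eq_or ha, or_two_pow_iff le_rfl]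

end IsHighSubmask

noncomputable instance (r b : ℕ) : DecidablePred (IsHighSubmask r b) := Classical.decPred _

theorem Tvec_succ_add_one {n b : ℕ} (hb : b < 2 ^ (n + 1)) :
    Tvec (n + 1) (b + 1) =
      Tvec n (b % 2 ^ n + 1) + if b.testBit n then Tvec n (b % 2 ^ n + 1) else 0 := by
  cases hbn : b.testBit n
  · have hlt : b < 2 ^ n := by
      rwa [← Nat.mod_two_pow_succ_lt_iff, Nat.mod_eq_of_lt hb] at hbn
    simp [Tvec, Nat.mod_eq_of_lt hlt, Nat.succ_le_of_lt hlt]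
  · have hle : 2 ^ n ≤ b := Nat.ge_two_pow_of_testBit hbn
    have hmod : b % 2 ^ n = b - 2 ^ n := by
      rw [Nat.pow_succ, Nat.mul_two] at hb
      rw [Nat.mod_eq_sub_mod hle, Nat.mod_eq_of_lt (by omega)]
    rw [Tvec, if_neg (by omega), hmod, if_pos rfl, show b + 1 - 2 ^ n = b - 2 ^ n + 1 by omega]
    ring

open Finset in
theorem card_filter_isHighSubmask_zero {n b : ℕ} (hb : b < 2 ^ n) :
    #{a ∈ range (2 ^ n) | IsHighSubmask 0 b a} = Tvec n (b + 1) := by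
  induction n generalizing b with
  | zero =>
    obtain rfl : b = 0 := by simpa using hb
    simp [filter_singleton, IsHighSubmask.refl, Tvec]
  | succ n ih =>
    set b' := b % 2 ^ n
    have hb' : b' < 2 ^ n := Nat.mod_lt _ (by positivity)
    have hlow : ∀ a ∈ range (2 ^ n), IsHighSubmask 0 b a ↔ IsHighSubmask 0 b' a :=
      fun a ha => IsHighSubmask.zero_iff_mod_two_pow (mem_range.1 ha)
    have hhigh : ∀ a ∈ range (2 ^ n),
        IsHighSubmask 0 b (2 ^ n + a) ↔ IsHighSubmask 0 b' a ∧ b.testBit n := fun a ha => by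
      rw [Nat.add_comm, Nat.add_two_pow_eq_or (Nat.testBit_lt_two_pow (mem_range.1 ha)),
        IsHighSubmask.or_two_pow_iff (Nat.zero_le n), hlow a ha]
    have hsumLow : ∑ a ∈ range (2 ^ n), (if IsHighSubmask 0 b a then 1 else 0) =
        Tvec n (b' + 1) := by
      rw [sum_congr rfl fun a ha => if_congr (hlow a ha) rfl rfl, ← card_filter, ih hb']
    have hsumHigh : ∑ a ∈ range (2 ^ n), (if IsHighSubmask 0 b (2 ^ n + a) then 1 else 0) =
        if b.testBit n then Tvec n (b' + 1) else 0 := by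
      rw [sum_congr rfl fun a ha => if_congr (hhigh a ha) rfl rfl]
      cases b.testBit n <;> simp [ih hb']
    rw [card_filter, Nat.pow_succ, Nat.mul_two, sum_range_add, hsumLow, hsumHigh,
      Tvec_succ_add_one hb]

theorem chkNbrs_succ (n k a : ℕ) : chkNbrs n k (a + 1) =
    if a.testBit (n - k) then {(k, a + 1), (k + 1, a + 1)}
    else {(k, a + 1), (k + 1, a + 1), (k + 1, a + 1 + 2 ^ (n - k))} := by
  simp only [chkNbrs, Nat.add_sub_cancel, Nat.mod_two_pow_succ_lt_iff]
  cases a.testBit (n - k) <;> rfl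

/-- The stopping condition at the check `c_{k, a+1}` with `s = n - k`, where `X` and `Y` are the
memberships of the (0-indexed) rows of columns `k` and `k + 1`. -/
def CheckStops (s : ℕ) (X Y : ℕ → Prop) (a : ℕ) : Prop :=
  if a.testBit s then (X a ↔ Y a) else
    (X a → Y a ∨ Y (a + 2 ^ s)) ∧ (Y a → X a ∨ Y (a + 2 ^ s)) ∧ (Y (a + 2 ^ s) → X a ∨ Y a)

theorem stops_chkNbrs_iff (n k a : ℕ) (ψ : Finset (ℕ × ℕ)) :
    ((∃ v ∈ chkNbrs n k (a + 1), v ∈ ψ) → 2 ≤ (chkNbrs n k (a + 1) ∩ ψ).card) ↔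
      CheckStops (n - k) (fun c => (k, c + 1) ∈ ψ) (fun c => (k + 1, c + 1) ∈ ψ) a := by
  rw [chkNbrs_succ, CheckStops]
  split_ifs
  · rw [Finset.two_le_card_pair_inter_iff (by simp)]
    simp only [Finset.mem_insert, Finset.mem_singleton, exists_eq_or_imp, exists_eq_left]
    tauto
  · rw [Finset.two_le_card_triple_inter_iff (by simp) (by simp) (by simp)]
    simp only [Finset.mem_insert, Finset.mem_singleton, exists_eq_or_imp, exists_eq_left,
      Nat.add_right_comm a 1]
    tauto

theorem isStoppingSet_iff {n : ℕ} {ψ : Finset (ℕ × ℕ)} : IsStoppingSet n ψ ↔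
    (∀ v ∈ ψ, IsVN n v.1 v.2) ∧ ∀ k, 1 ≤ k → k ≤ n → ∀ a < 2 ^ n,
      CheckStops (n - k) (fun c => (k, c + 1) ∈ ψ) (fun c => (k + 1, c + 1) ∈ ψ) a := by
  refine and_congr_right fun _ => ⟨fun h k hk1 hk2 a ha => ?_, fun h k i ⟨hk1, hk2, hi1, hi2⟩ => ?_⟩
  · exact (stops_chkNbrs_iff n k a ψ).1 (h k (a + 1) ⟨hk1, hk2, by omega, ha⟩)
  · obtain ⟨a, rfl⟩ : ∃ a, i = a + 1 := ⟨i - 1, by omega⟩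
    exact (stops_chkNbrs_iff n k a ψ).2 (h k hk1 hk2 a hi2)

theorem checkStops_isHighSubmask (s b a : ℕ) :
    CheckStops s (IsHighSubmask (s + 1) b) (IsHighSubmask s b) a := by
  rw [CheckStops]
  split_ifs with ha
  · exact IsHighSubmask.succ_iff_of_testBit ha
  · rw [Bool.not_eq_true] at ha
    rw [IsHighSubmask.succ_iff_of_not_testBit ha, IsHighSubmask.add_two_pow_iff ha]
    cases b.testBit s <;> simp

theorem isHighSubmask_iff_of_checkStops {n s b : ℕ} {Y : ℕ → Prop}
    (hstop : ∀ a < 2 ^ n, CheckStops s (IsHighSubmask (s + 1) b) Y a)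
    (hY : ∀ a, Y a → a < 2 ^ n) (hs : s < n) (hb : b < 2 ^ n) (a : ℕ) :
    Y a ↔ IsHighSubmask s b a := by
  by_cases ha : a < 2 ^ n
  · have hstop_a := hstop a ha
    rw [CheckStops] at hstop_a
    split_ifs at hstop_a with hbit
    · rw [← hstop_a, IsHighSubmask.succ_iff_of_testBit hbit]
    · rw [Bool.not_eq_true] at hbit
      have hc : a + 2 ^ s < 2 ^ n := by
        rw [Nat.add_two_pow_eq_or hbit]
        exact Nat.or_lt_two_pow ha (Nat.pow_lt_pow_right one_lt_two hs)
      have hstop_c := hstop _ hc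
      rw [CheckStops, if_pos (Nat.testBit_add_two_pow_self hbit),
        IsHighSubmask.succ_iff_of_testBit (Nat.testBit_add_two_pow_self hbit),
        IsHighSubmask.add_two_pow_iff hbit] at hstop_c
      rw [IsHighSubmask.succ_iff_of_not_testBit hbit] at hstop_a
      cases hbs : b.testBit s <;>
        simp only [hbs, Bool.false_eq_true, Bool.true_eq_false, and_false, and_true, false_iff,
          false_or] at hstop_a hstop_c
      · exact ⟨fun h => (hstop_a.2.1 h).resolve_right hstop_c,
          fun h => (hstop_a.1 h).resolve_right hstop_c⟩
      · exact ⟨fun h => hstop_c.2 (hstop_a.2.1 h), fun h => hstop_a.2.2 (hstop_c.1 h)⟩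
  · exact iff_of_false (fun h => ha (hY a h)) (fun h => ha (h.le.trans_lt hb))

/-- Column `k` of the stopping tree rooted at `v_{1, b+1}` holds the rows `a + 1` for which `a`
arises from `b` by clearing some of its bits in positions `≥ n + 1 - k`. -/
noncomputable def stoppingTree (n b : ℕ) : Finset (ℕ × ℕ) :=
  (Finset.Icc 1 (n + 1) ×ˢ Finset.Icc 1 (2 ^ n)).filter fun v =>
    IsHighSubmask (n + 1 - v.1) b (v.2 - 1)

theorem mem_stoppingTree {n b k j : ℕ} : (k, j) ∈ stoppingTree n b ↔
    (1 ≤ k ∧ k ≤ n + 1 ∧ 1 ≤ j ∧ j ≤ 2 ^ n) ∧ IsHighSubmask (n + 1 - k) b (j - 1) := by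
  simp [stoppingTree, and_assoc]

theorem mem_stoppingTree_succ {n b k a : ℕ} (hb : b < 2 ^ n) (hk1 : 1 ≤ k) (hk2 : k ≤ n + 1) :
    (k, a + 1) ∈ stoppingTree n b ↔ IsHighSubmask (n + 1 - k) b a := by
  rw [mem_stoppingTree, Nat.add_sub_cancel]
  exact ⟨And.right, fun h => ⟨⟨hk1, hk2, by omega, by have := h.le; omega⟩, h⟩⟩

theorem isStoppingTree_stoppingTree {n b : ℕ} (hb : b < 2 ^ n) :
    IsStoppingTree n (b + 1) (stoppingTree n b) := by
  refine ⟨isStoppingSet_iff.2 ⟨fun v hv => (mem_stoppingTree.1 hv).1, ?_⟩, ?_⟩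
  · intro k hk1 hk2 a _
    have hX : (fun c => (k, c + 1) ∈ stoppingTree n b) = IsHighSubmask (n - k + 1) b := by
      ext c; rw [mem_stoppingTree_succ hb hk1 (by omega), show n + 1 - k = n - k + 1 by omega]
    have hY : (fun c => (k + 1, c + 1) ∈ stoppingTree n b) = IsHighSubmask (n - k) b := by
      ext c; rw [mem_stoppingTree_succ hb (by omega) (by omega), Nat.add_sub_add_right]
    rw [hX, hY]
    exact checkStops_isHighSubmask _ _ _
  · ext ⟨k, j⟩
    simp only [Finset.mem_filter, Finset.mem_singleton, Prod.mk.injEq, mem_stoppingTree]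
    constructor
    · rintro ⟨⟨⟨-, -, hj, -⟩, h⟩, rfl⟩
      rw [Nat.add_sub_cancel, IsHighSubmask.iff_eq hb] at h
      omega
    · rintro ⟨rfl, rfl⟩
      exact ⟨⟨⟨le_rfl, by omega, by omega, by omega⟩, IsHighSubmask.refl _ _⟩, rfl⟩

theorem IsStoppingTree.mem_iff_isHighSubmask {n b : ℕ} {ψ : Finset (ℕ × ℕ)}
    (hψ : IsStoppingTree n (b + 1) ψ) (hb : b < 2 ^ n) :
    ∀ d ≤ n, ∀ a, (d + 1, a + 1) ∈ ψ ↔ IsHighSubmask (n - d) b a := by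
  obtain ⟨hS, hroot⟩ := hψ
  obtain ⟨hVN, hlayer⟩ := isStoppingSet_iff.1 hS
  intro d
  induction d with
  | zero =>
    intro _ a
    have := Finset.ext_iff.1 hroot (1, a + 1)
    simp only [Finset.mem_filter, Finset.mem_singleton, Prod.mk.injEq, and_true, true_and,
      Nat.add_right_cancel_iff] at this
    rw [this, Nat.sub_zero, IsHighSubmask.iff_eq hb]
  | succ d ih =>
    intro hd
    have hX : (fun c => (d + 1, c + 1) ∈ ψ) = IsHighSubmask (n - (d + 1) + 1) b := by
      ext c; rw [ih (by omega), show n - (d + 1) + 1 = n - d by omega]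
    have hstop := hlayer (d + 1) (by omega) hd
    rw [hX] at hstop
    exact isHighSubmask_iff_of_checkStops hstop (fun a h => by have := (hVN _ h).2.2.2; omega)
      (by omega) hb

theorem IsStoppingTree.eq_stoppingTree {n b : ℕ} {ψ : Finset (ℕ × ℕ)}
    (hψ : IsStoppingTree n (b + 1) ψ) (hb : b < 2 ^ n) : ψ = stoppingTree n b := by
  have hcol : ∀ d ≤ n, ∀ a, (d + 1, a + 1) ∈ ψ ↔ (d + 1, a + 1) ∈ stoppingTree n b :=
    fun d hd a => by
      rw [hψ.mem_iff_isHighSubmask hb d hd, mem_stoppingTree_succ hb (by omega) (by omega),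
        Nat.add_sub_add_right]
  ext ⟨k, j⟩
  by_cases hkj : 1 ≤ k ∧ k ≤ n + 1 ∧ 1 ≤ j
  · obtain ⟨d, rfl⟩ : ∃ d, k = d + 1 := ⟨k - 1, by omega⟩
    obtain ⟨a, rfl⟩ : ∃ a, j = a + 1 := ⟨j - 1, by omega⟩
    exact hcol d (by omega) a
  · refine iff_of_false (fun h => hkj ?_) (fun h => hkj ?_)
    · obtain ⟨hk1, hk2, hj, -⟩ := hψ.1.1 _ h
      exact ⟨hk1, hk2, hj⟩
    · obtain ⟨⟨hk1, hk2, hj, -⟩, -⟩ := mem_stoppingTree.1 h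
      exact ⟨hk1, hk2, hj⟩

theorem card_leafSet_stoppingTree {n b : ℕ} (hb : b < 2 ^ n) :
    (leafSet n (stoppingTree n b)).card = Tvec n (b + 1) := by
  have hleaves : leafSet n (stoppingTree n b) =
      ((Finset.range (2 ^ n)).filter (IsHighSubmask 0 b)).image fun a => (n + 1, a + 1) := by
    ext ⟨k, j⟩
    simp only [leafSet, Finset.mem_filter, Finset.mem_image, Finset.mem_range,
      Prod.mk.injEq, mem_stoppingTree]
    constructor
    · rintro ⟨⟨⟨-, -, hj1, hj2⟩, h⟩, rfl⟩
      exact ⟨j - 1, ⟨by omega, by rwa [Nat.sub_self] at h⟩, rfl, by omega⟩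
    · rintro ⟨a, ⟨ha, h⟩, rfl, rfl⟩
      exact ⟨⟨⟨by omega, le_rfl, by omega, by omega⟩, by simpa using h⟩, rfl⟩
  rw [hleaves, Finset.card_image_of_injective _ fun a a' h => by simpa using h,
    card_filter_isHighSubmask_zero hb]

/-- For every `1 ≤ i ≤ 2^n`, there is a unique stopping tree rooted at `v_{1,i}` in
`G_{2^n}`, and the size of its leaf set equals the `i`-th entry of `T₂^{⊗n}`. -/
theorem leafSet_card_stoppingTree (n i : ℕ) (h1 : 1 ≤ i) (h2 : i ≤ 2 ^ n) :
    (∃! ψ : Finset (ℕ × ℕ), IsStoppingTree n i ψ) ∧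
    ∀ ψ : Finset (ℕ × ℕ), IsStoppingTree n i ψ → (leafSet n ψ).card = Tvec n i := by
  obtain ⟨b, rfl⟩ : ∃ b, i = b + 1 := ⟨i - 1, by omega⟩
  have hb : b < 2 ^ n := by omega
  refine ⟨⟨stoppingTree n b, isStoppingTree_stoppingTree hb,
    fun ψ hψ => hψ.eq_stoppingTree hb⟩, fun ψ hψ => ?_⟩
  rw [hψ.eq_stoppingTree hb, card_leafSet_stoppingTree hb]
end

section
/- Let Ñ = 2^n and let F̃ be a frozen index set with [Ñ − μ + 1, Ñ] ⊆ F̃. Then no stopping set of the factor graph G_{Ñ} that avoids all frozen variable nodes {v_{1,i} : i ∈ F̃} contains any variable node v_{(n+1),i} with Ñ − μ + 1 ≤ i ≤ Ñ. That is, stopping sets avoiding the frozen leftmost-column nodes contain no rightmost-column nodes from the bottom μ rows. -/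
/-!
The check `c_{k,i}` joins `v_{k+1,i}` only to `v_{k,i}` and possibly to `v_{k+1,i+2^(n-k)}`.
So a node of a stopping set in column `k+1` forces its left neighbour or a node strictly
lower in the same column. Both moves keep the row at least `2^n - μ + 1`, and the lower
moves cannot go on forever, so a bottom-row node in column `n+1` would propagate to a
frozen node of column `1`.
-/

namespace IsStoppingSet

variable {n : ℕ} {ψ : Finset (ℕ × ℕ)}

theorem mem_left_or_mem_slant (hψ : IsStoppingSet n ψ) {k i : ℕ} (hk : 1 ≤ k)
    (hmem : (k + 1, i) ∈ ψ) : (k, i) ∈ ψ ∨ (k + 1, i + 2 ^ (n - k)) ∈ ψ := by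
  by_contra! h
  obtain ⟨-, hkn, hi1, hin⟩ := hψ.1 _ hmem
  have hnbr : (k + 1, i) ∈ chkNbrs n k i := by
    unfold chkNbrs; split_ifs <;> simp
  have hsub : chkNbrs n k i ∩ ψ ⊆ {(k + 1, i)} := by
    intro x hx
    obtain ⟨hx, hxψ⟩ := Finset.mem_inter.mp hx
    unfold chkNbrs at hx
    split_ifs at hx <;> simp only [Finset.mem_insert, Finset.mem_singleton] at hx <;>
      rcases hx with rfl | rfl | rfl <;> simp_all
  have hcard := hψ.2 k i ⟨hk, by omega, hi1, hin⟩ ⟨_, hnbr, hmem⟩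
  have := Finset.card_le_card hsub
  simp only [Finset.card_singleton] at this
  omega

theorem not_mem_succ_of_not_mem (hψ : IsStoppingSet n ψ) {k L : ℕ} (hk : 1 ≤ k)
    (hleft : ∀ i, L ≤ i → (k, i) ∉ ψ) : ∀ i, L ≤ i → (k + 1, i) ∉ ψ := by
  intro i
  induction hd : 2 ^ n - i using Nat.strong_induction_on generalizing i with
  | _ d ih =>
    intro hL hmem
    rcases hψ.mem_left_or_mem_slant hk hmem with hl | hs
    · exact hleft i hL hl
    · have hbelow : i + 2 ^ (n - k) ≤ 2 ^ n := (hψ.1 _ hs).2.2.2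
      have hpos : 0 < 2 ^ (n - k) := Nat.two_pow_pos _
      exact ih _ (by omega) _ rfl (by omega) hs

theorem not_mem_of_not_mem_first (hψ : IsStoppingSet n ψ) {L : ℕ}
    (hfirst : ∀ i, L ≤ i → (1, i) ∉ ψ) : ∀ k, 1 ≤ k → ∀ i, L ≤ i → (k, i) ∉ ψ := by
  intro k hk
  induction k, hk using Nat.le_induction with
  | base => exact hfirst
  | succ k hk ih => exact hψ.not_mem_succ_of_not_mem hk ih

end IsStoppingSet

theorem no_bottom_leaf_of_bottom_frozen_general (n μ : ℕ) (F : Finset ℕ)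
    (hbot : Finset.Icc (2 ^ n - μ + 1) (2 ^ n) ⊆ F)
    (ψ : Finset (ℕ × ℕ)) (hψ : IsStoppingSet n ψ)
    (havoid : ∀ j ∈ F, (1, j) ∉ ψ) :
    ∀ i, 2 ^ n - μ + 1 ≤ i → i ≤ 2 ^ n → (n + 1, i) ∉ ψ := by
  have hfirst : ∀ i, 2 ^ n - μ + 1 ≤ i → (1, i) ∉ ψ := fun i hL hmem =>
    havoid i (hbot (Finset.mem_Icc.mpr ⟨hL, (hψ.1 _ hmem).2.2.2⟩)) hmem
  intro i hL _
  exact hψ.not_mem_of_not_mem_first hfirst (n + 1) (by omega) i hL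

/-- If the bottom `μ` rows `[2^n - μ + 1, 2^n]` of the leftmost column are frozen
(contained in `F̃`), then no stopping set of `G_{2^n}` avoiding all frozen
leftmost-column nodes contains a rightmost-column node from the bottom `μ` rows. -/
theorem no_bottom_leaf_of_bottom_frozen (n μ : ℕ) (F : Finset ℕ)
    (hF : F ⊆ Finset.Icc 1 (2 ^ n))
    (hbot : Finset.Icc (2 ^ n - μ + 1) (2 ^ n) ⊆ F)
    (ψ : Finset (ℕ × ℕ)) (hψ : IsStoppingSet n ψ)
    (havoid : ∀ j ∈ F, (1, j) ∉ ψ) :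
    ∀ i, 2 ^ n - μ + 1 ≤ i → i ≤ 2 ^ n → (n + 1, i) ∉ ψ :=
  no_bottom_leaf_of_bottom_frozen_general n μ F hbot ψ hψ havoid
end

section
/- Let Ñ = 2^n. If all variable nodes v_{1,i} for Ñ − μ + 1 ≤ i ≤ Ñ in the leftmost column of the factor graph G_{Ñ} are set to zero, then in any valid assignment satisfying all check constraints of G_{Ñ}, every variable node v_{k,i} with Ñ − μ + 1 ≤ i ≤ Ñ and 1 ≤ k ≤ n+1 equals zero. -/
/-! The check `c_{k,i}` forces `v_{k+1,i} = v_{k,i}`, or, when it has degree three,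
`v_{k+1,i} = v_{k,i} + v_{k+1,i'}` with `i' = i + 2^(n-k)`; the check `c_{k,i'}` then has degree
two, so `v_{k+1,i'} = v_{k,i'}`. Since `i' > i`, a column vanishing on a final segment of rows
forces the next column to vanish there too, and induction on the column gives the theorem. -/

lemma Nat.add_lt_and_le_mod_of_mod_lt {a d m : ℕ} (hmod : a % (2 * d) < d)
    (ha : a < 2 * d * m) : a + d < 2 * d * m ∧ d ≤ (a + d) % (2 * d) := by
  have hdiv := Nat.div_add_mod a (2 * d)
  have hq : a / (2 * d) < m := by
    by_contra! h
    have := Nat.mul_le_mul_left (2 * d) h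
    omega
  have hq' := Nat.mul_le_mul_left (2 * d) (Nat.succ_le_of_lt hq)
  have hshift : (a + d) % (2 * d) = a % (2 * d) + d := by
    conv_lhs => rw [← hdiv, add_assoc, Nat.mul_add_mod]
    exact Nat.mod_eq_of_lt (by omega)
  constructor
  · rw [Nat.mul_succ] at hq'
    omega
  · omega

/-- The row `i + 2^(n-k)` reached by the slanted edge of `c_{k,i}` lies in `G_{2^n}`, and its own
check in stage `k` has degree two. -/
lemma partner_row {n k i : ℕ} (hc : IsCheck n k i)
    (hmod : (i - 1) % 2 ^ (n - k + 1) < 2 ^ (n - k)) :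
    i + 2 ^ (n - k) ≤ 2 ^ n ∧ ¬ (i + 2 ^ (n - k) - 1) % 2 ^ (n - k + 1) < 2 ^ (n - k) := by
  obtain ⟨hk1, hkn, hi1, hin⟩ := hc
  have hblocks : 2 ^ n = 2 * 2 ^ (n - k) * 2 ^ (k - 1) := by
    rw [← pow_succ', ← pow_add]
    congr 1
    omega
  rw [pow_succ'] at hmod ⊢
  obtain ⟨hlt, hle⟩ :=
    Nat.add_lt_and_le_mod_of_mod_lt hmod (a := i - 1) (m := 2 ^ (k - 1)) (by omega)
  have hsub : i + 2 ^ (n - k) - 1 = i - 1 + 2 ^ (n - k) := by omega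
  rw [hsub]
  omega

section Checks

variable {G : Type*} [AddCommGroup G] {n : ℕ} {x : ℕ × ℕ → G}

lemma check_sum_of_not_mod_lt {k i : ℕ} (hsum : ∑ v ∈ chkNbrs n k i, x v = 0)
    (hmod : ¬ (i - 1) % 2 ^ (n - k + 1) < 2 ^ (n - k)) :
    x (k, i) + x (k + 1, i) = 0 := by
  rwa [chkNbrs, if_neg hmod, Finset.sum_pair (by simp)] at hsum

lemma check_sum_of_mod_lt {k i : ℕ} (hsum : ∑ v ∈ chkNbrs n k i, x v = 0)
    (hmod : (i - 1) % 2 ^ (n - k + 1) < 2 ^ (n - k)) :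
    x (k, i) + (x (k + 1, i) + x (k + 1, i + 2 ^ (n - k))) = 0 := by
  rwa [chkNbrs, if_pos hmod, Finset.sum_insert (by simp),
    Finset.sum_pair (by simp)] at hsum

lemma column_succ_eq_zero (hcheck : ∀ k i, IsCheck n k i → ∑ v ∈ chkNbrs n k i, x v = 0)
    {k r : ℕ} (hk1 : 1 ≤ k) (hkn : k ≤ n) (hr : 1 ≤ r)
    (hzero : ∀ i, r ≤ i → i ≤ 2 ^ n → x (k, i) = 0) :
    ∀ i, r ≤ i → i ≤ 2 ^ n → x (k + 1, i) = 0 := by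
  intro i hri hin
  have hc : IsCheck n k i := ⟨hk1, hkn, by omega, hin⟩
  by_cases hmod : (i - 1) % 2 ^ (n - k + 1) < 2 ^ (n - k)
  · obtain ⟨hpin, hpmod⟩ := partner_row hc hmod
    have hpartner := check_sum_of_not_mod_lt (hcheck k _ ⟨hk1, hkn, by omega, hpin⟩) hpmod
    have hself := check_sum_of_mod_lt (hcheck k i hc) hmod
    rw [hzero _ (by omega) hpin, zero_add] at hpartner
    rwa [hzero i hri hin, hpartner, add_zero, zero_add] at hself
  · have hself := check_sum_of_not_mod_lt (hcheck k i hc) hmod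
    rwa [hzero i hri hin, zero_add] at hself

end Checks

/-- If all leftmost-column variable nodes in the bottom `μ` rows of `G_{2^n}` are
zero, then in any assignment over GF(2) satisfying every check constraint (the XOR
of the neighbors of each check node is zero), every variable node in the bottom `μ`
rows, in every column, is zero. -/
theorem bottom_rows_zero (n μ : ℕ) (x : ℕ × ℕ → ZMod 2)
    (hcheck : ∀ k i, IsCheck n k i → ∑ v ∈ chkNbrs n k i, x v = 0)
    (hfrozen : ∀ i, 2 ^ n - μ + 1 ≤ i → i ≤ 2 ^ n → x (1, i) = 0) :
    ∀ k i, 1 ≤ k → k ≤ n + 1 → 2 ^ n - μ + 1 ≤ i → i ≤ 2 ^ n → x (k, i) = 0 := by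
  intro k i hk1 hkn
  induction k, hk1 using Nat.le_induction generalizing i with
  | base => exact hfrozen i
  | succ k hk1 ih =>
    exact column_succ_eq_zero hcheck hk1 (by omega) (by omega) (fun j => ih j (by omega)) i
end

section
/- Let A_l be the information index set of a polar code of length N_l = 2^n used at the base layer. Then the minimum leaf-set size over all stopping sets of G_{N_l} avoiding the frozen leftmost-column nodes equals min over i ∈ A_l of f_i^{N_l}, the leaf-set size of the stopping tree rooted at v_{1,i}. Consequently the undecodable threshold α_min = min_{i ∈ A_l} T_{N_l}(i). -/
/-! Deleting the first column of `G_{2^(m+1)}` leaves two disjoint copies of `G_{2^m}`, on the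
rows `≤ 2^m` and `> 2^m`; the upper and lower halves `block m 0 ψ` and `block m (2^m) ψ` of a
stopping set are stopping sets of `G_{2^m}` whose leaf counts add up to that of `ψ`. The stage-1
checks tie the roots of `ψ` to those of the halves: `v_{1,j}`, `v_{2,j}` and `v_{2,j+2^m}` (the
roots of row `j` of the two halves) share a degree-3 check, and `v_{1,j+2^m}`, `v_{2,j+2^m}` a
degree-2 one. Induction on `n` gives two bounds. A nonempty stopping set has a root `j` with
`T(j) ≤ |leaves|`: take a root `j` of minimal weight in the two halves; either `v_{1,j}` lies
in `ψ`, or both halves contain row `j` and `v_{1,j+2^m}`, of weight `2 T(j)`, is a root. A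
stopping set whose only possible root is `v_{1,i}` has at most `T(i)` leaves. So a stopping tree
rooted at `v_{1,i}` has exactly `T(i)` leaves, and the minimum is attained by stopping trees. -/

theorem add_lt_of_mod_two_mul_lt {x N b : ℕ} (hx : x < N) (hN : 2 * b ∣ N)
    (hr : x % (2 * b) < b) : x + b < N := by
  have hq : x / (2 * b) + 1 ≤ N / (2 * b) := Nat.div_lt_div_of_lt_of_dvd hN hx
  calc x + b = 2 * b * (x / (2 * b)) + x % (2 * b) + b := by rw [Nat.div_add_mod]
    _ < 2 * b * (x / (2 * b) + 1) := by linarith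
    _ ≤ 2 * b * (N / (2 * b)) := Nat.mul_le_mul_left _ hq
    _ = N := Nat.mul_div_cancel' hN

theorem IsCheck.isVN_of_mem_chkNbrs {n k i : ℕ} {v : ℕ × ℕ} (hc : IsCheck n k i)
    (hv : v ∈ chkNbrs n k i) : IsVN n v.1 v.2 := by
  obtain ⟨hk1, hkn, hi1, hin⟩ := hc
  unfold chkNbrs at hv
  split_ifs at hv with htop
  · have hslant : i - 1 + 2 ^ (n - k) < 2 ^ n := by
      refine add_lt_of_mod_two_mul_lt (by omega) ?_ (by rwa [← pow_succ'])
      rw [← pow_succ']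
      exact pow_dvd_pow 2 (by omega)
    simp only [Finset.mem_insert, Finset.mem_singleton] at hv
    rcases hv with rfl | rfl | rfl <;> exact ⟨by omega, by omega, by omega, by omega⟩
  · simp only [Finset.mem_insert, Finset.mem_singleton] at hv
    rcases hv with rfl | rfl <;> exact ⟨by omega, by omega, by omega, by omega⟩

theorem chkNbrs_succ_succ_add (m k i o : ℕ) (hi : 1 ≤ i) (ho : 2 ^ (m - k + 1) ∣ o) :
    chkNbrs (m + 1) (k + 1) (i + o) =
      (chkNbrs m k i).image fun v => (v.1 + 1, v.2 + o) := by
  obtain ⟨c, rfl⟩ := ho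
  have hmod : (i + 2 ^ (m - k + 1) * c - 1) % 2 ^ (m - k + 1) = (i - 1) % 2 ^ (m - k + 1) := by
    rw [show i + 2 ^ (m - k + 1) * c - 1 = i - 1 + 2 ^ (m - k + 1) * c by omega,
      Nat.add_mul_mod_self_left]
  unfold chkNbrs
  rw [Nat.add_sub_add_right, hmod]
  split_ifs <;> simp [Finset.image_insert, Nat.add_right_comm]

def block (m o : ℕ) (ψ : Finset (ℕ × ℕ)) : Finset (ℕ × ℕ) :=
  (Finset.Icc 1 (m + 1) ×ˢ Finset.Icc 1 (2 ^ m)).filter fun v => (v.1 + 1, v.2 + o) ∈ ψ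

theorem mem_block {m o k i : ℕ} {ψ : Finset (ℕ × ℕ)} :
    (k, i) ∈ block m o ψ ↔ IsVN m k i ∧ (k + 1, i + o) ∈ ψ := by
  simp [block, IsVN, and_assoc]

theorem isStoppingSet_block {m o : ℕ} {ψ : Finset (ℕ × ℕ)} (h : IsStoppingSet (m + 1) ψ)
    (hdvd : 2 ^ m ∣ o) (hle : o ≤ 2 ^ m) : IsStoppingSet m (block m o ψ) := by
  refine ⟨fun _ hv => (mem_block.1 hv).1, fun k i hc ⟨v, hv, hvψ⟩ => ?_⟩
  obtain ⟨hk1, hkm, hi1, him⟩ := hc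
  have hc' : IsCheck (m + 1) (k + 1) (i + o) :=
    ⟨by omega, by omega, by omega, by rw [pow_succ]; omega⟩
  have hnbrs := chkNbrs_succ_succ_add m k i o hi1 ((pow_dvd_pow 2 (by omega)).trans hdvd)
  calc 2 ≤ (chkNbrs (m + 1) (k + 1) (i + o) ∩ ψ).card :=
        h.2 _ _ hc' ⟨_, hnbrs ▸ Finset.mem_image_of_mem _ hv, (mem_block.1 hvψ).2⟩
    _ ≤ ((chkNbrs m k i ∩ block m o ψ).image fun v => (v.1 + 1, v.2 + o)).card := by
        refine Finset.card_le_card fun w hw => ?_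
        rw [hnbrs, Finset.mem_inter, Finset.mem_image] at hw
        obtain ⟨⟨u, hu, rfl⟩, huψ⟩ := hw
        exact Finset.mem_image_of_mem _ (Finset.mem_inter.2
          ⟨hu, mem_block.2 ⟨IsCheck.isVN_of_mem_chkNbrs ⟨hk1, hkm, hi1, him⟩ hu, huψ⟩⟩)
    _ ≤ (chkNbrs m k i ∩ block m o ψ).card := Finset.card_image_le

theorem card_leafSet_block (m o : ℕ) (ψ : Finset (ℕ × ℕ)) :
    (leafSet m (block m o ψ)).card =
      ((leafSet (m + 1) ψ).filter fun v => o < v.2 ∧ v.2 ≤ o + 2 ^ m).card := by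
  refine Finset.card_nbij' (fun v => (v.1 + 1, v.2 + o)) (fun v => (v.1 - 1, v.2 - o))
    ?_ ?_ ?_ ?_ <;> intro ⟨a, b⟩ hv <;>
    simp only [Finset.mem_coe, leafSet, Finset.mem_filter, mem_block, IsVN] at hv ⊢
  · refine ⟨⟨hv.1.2, by omega⟩, by omega, by omega⟩
  · obtain ⟨⟨hψ, rfl⟩, ho, hb⟩ := hv
    refine ⟨⟨⟨by omega, by omega, by omega, by omega⟩, ?_⟩, by omega⟩
    simpa [Nat.sub_add_cancel ho.le] using hψ
  · simp
  · simp only [Prod.mk.injEq]; omega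

theorem card_leafSet_succ {m : ℕ} {ψ : Finset (ℕ × ℕ)} (hψ : ∀ v ∈ ψ, IsVN (m + 1) v.1 v.2) :
    (leafSet (m + 1) ψ).card =
      (leafSet m (block m 0 ψ)).card + (leafSet m (block m (2 ^ m) ψ)).card := by
  rw [card_leafSet_block, card_leafSet_block, ← Finset.card_union_of_disjoint, ← Finset.filter_or,
    Finset.filter_true_of_mem]
  · intro v hv
    have := hψ v (Finset.mem_filter.1 hv).1
    rw [IsVN, pow_succ] at this
    omega
  · exact Finset.disjoint_filter.2 fun v _ h1 h2 => by omega

theorem chkNbrs_succ_one_of_le {m j : ℕ} (hj : j ≤ 2 ^ m) :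
    chkNbrs (m + 1) 1 j = {(1, j), (2, j), (2, j + 2 ^ m)} := by
  have hlt : j - 1 < 2 ^ (m + 1) := by rw [pow_succ]; have := Nat.one_le_two_pow (n := m); omega
  rw [chkNbrs, if_pos (by rw [Nat.add_sub_cancel, Nat.mod_eq_of_lt hlt]; omega), Nat.add_sub_cancel]

theorem chkNbrs_succ_one_add {m j : ℕ} (hj1 : 1 ≤ j) (hj : j ≤ 2 ^ m) :
    chkNbrs (m + 1) 1 (j + 2 ^ m) = {(1, j + 2 ^ m), (2, j + 2 ^ m)} := by
  have hlt : j + 2 ^ m - 1 < 2 ^ (m + 1) := by rw [pow_succ]; omega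
  rw [chkNbrs, if_neg (by rw [Nat.add_sub_cancel, Nat.mod_eq_of_lt hlt]; omega)]

theorem isCheck_succ_one {m j : ℕ} (hj1 : 1 ≤ j) (hj : j ≤ 2 ^ (m + 1)) :
    IsCheck (m + 1) 1 j :=
  ⟨le_rfl, by omega, hj1, hj⟩

namespace IsStoppingSet

variable {n m k i j : ℕ} {ψ : Finset (ℕ × ℕ)}

theorem exists_mem_ne (h : IsStoppingSet n ψ) (hc : IsCheck n k i) {v : ℕ × ℕ}
    (hv : v ∈ chkNbrs n k i) (hvψ : v ∈ ψ) : ∃ w ∈ chkNbrs n k i, w ∈ ψ ∧ w ≠ v := by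
  obtain ⟨w, hw, hne⟩ := Finset.exists_mem_ne (h.2 k i hc ⟨v, hv, hvψ⟩) v
  exact ⟨w, (Finset.mem_inter.1 hw).1, (Finset.mem_inter.1 hw).2, hne⟩

theorem mem_or_mem_of_chkNbrs_eq_triple (h : IsStoppingSet n ψ) (hc : IsCheck n k i)
    {a b c : ℕ × ℕ} (habc : chkNbrs n k i = {a, b, c}) (ha : a ∈ ψ) : b ∈ ψ ∨ c ∈ ψ := by
  obtain ⟨w, hw, hwψ, hwa⟩ := h.exists_mem_ne hc (by simp [habc]) ha
  simp only [habc, Finset.mem_insert, Finset.mem_singleton, hwa, false_or] at hw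
  rcases hw with rfl | rfl <;> simp [hwψ]

theorem mem_of_chkNbrs_eq_pair (h : IsStoppingSet n ψ) (hc : IsCheck n k i)
    {a b : ℕ × ℕ} (hab : chkNbrs n k i = {a, b}) (ha : a ∈ ψ) : b ∈ ψ := by
  obtain ⟨w, hw, hwψ, hwa⟩ := h.exists_mem_ne hc (by simp [hab]) ha
  simp only [hab, Finset.mem_insert, Finset.mem_singleton, hwa, false_or] at hw
  exact hw ▸ hwψ

theorem mem_upper_or_mem_lower_of_mem (h : IsStoppingSet (m + 1) ψ) (hj : j ≤ 2 ^ m)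
    (hx : (1, j) ∈ ψ) : (1, j) ∈ block m 0 ψ ∨ (1, j) ∈ block m (2 ^ m) ψ := by
  have hvn := h.1 _ hx
  have hvn' : IsVN m 1 j := ⟨le_rfl, by omega, hvn.2.2.1, hj⟩
  simpa [mem_block, hvn'] using
    h.mem_or_mem_of_chkNbrs_eq_triple (isCheck_succ_one hvn.2.2.1 hvn.2.2.2)
      (chkNbrs_succ_one_of_le hj) hx

theorem mem_or_mem_lower_of_mem_upper (h : IsStoppingSet (m + 1) ψ)
    (hu : (1, j) ∈ block m 0 ψ) : (1, j) ∈ ψ ∨ (1, j) ∈ block m (2 ^ m) ψ := by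
  obtain ⟨hvn, h2⟩ := mem_block.1 hu
  have hnbrs : chkNbrs (m + 1) 1 j = {(2, j), (1, j), (2, j + 2 ^ m)} := by
    rw [chkNbrs_succ_one_of_le hvn.2.2.2, Finset.insert_comm]
  have := h.mem_or_mem_of_chkNbrs_eq_triple
    (isCheck_succ_one hvn.2.2.1 (by rw [pow_succ]; have := hvn.2.2.2; omega)) hnbrs h2
  simpa [mem_block, hvn] using this

theorem mem_or_mem_upper_of_mem_lower (h : IsStoppingSet (m + 1) ψ)
    (hl : (1, j) ∈ block m (2 ^ m) ψ) : (1, j) ∈ ψ ∨ (1, j) ∈ block m 0 ψ := by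
  obtain ⟨hvn, h2⟩ := mem_block.1 hl
  have hnbrs : chkNbrs (m + 1) 1 j = {(2, j + 2 ^ m), (1, j), (2, j)} := by
    rw [chkNbrs_succ_one_of_le hvn.2.2.2, Finset.pair_comm, Finset.insert_comm]
  have := h.mem_or_mem_of_chkNbrs_eq_triple
    (isCheck_succ_one hvn.2.2.1 (by rw [pow_succ]; have := hvn.2.2.2; omega)) hnbrs h2
  simpa [mem_block, hvn] using this

theorem mem_lower_iff (h : IsStoppingSet (m + 1) ψ) (hj1 : 1 ≤ j) (hj : j ≤ 2 ^ m) :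
    (1, j) ∈ block m (2 ^ m) ψ ↔ (1, j + 2 ^ m) ∈ ψ := by
  have hc : IsCheck (m + 1) 1 (j + 2 ^ m) := isCheck_succ_one (by omega) (by rw [pow_succ]; omega)
  have hnbrs := chkNbrs_succ_one_add hj1 hj
  have hvn : IsVN m 1 j := ⟨le_rfl, by omega, hj1, hj⟩
  simp only [mem_block, hvn, true_and]
  exact ⟨h.mem_of_chkNbrs_eq_pair hc (hnbrs.trans (Finset.pair_comm _ _)),
    h.mem_of_chkNbrs_eq_pair hc hnbrs⟩

theorem block_nonempty (h : IsStoppingSet (m + 1) ψ) (hne : ψ.Nonempty) :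
    (block m 0 ψ).Nonempty ∨ (block m (2 ^ m) ψ).Nonempty := by
  obtain ⟨⟨c, d⟩, hmem⟩ := hne
  obtain ⟨hc1, hcm, hd1, hd⟩ := h.1 _ hmem
  rw [pow_succ] at hd
  obtain rfl | hc := (show c = 1 ∨ 2 ≤ c by omega)
  · by_cases hdm : d ≤ 2 ^ m
    · rcases h.mem_upper_or_mem_lower_of_mem hdm hmem with hu | hl
      exacts [.inl ⟨_, hu⟩, .inr ⟨_, hl⟩]
    · obtain ⟨j, rfl⟩ : ∃ j, d = j + 2 ^ m := ⟨d - 2 ^ m, by omega⟩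
      exact .inr ⟨_, (h.mem_lower_iff (by omega) (by omega)).2 hmem⟩
  · obtain ⟨c, rfl⟩ : ∃ c', c = c' + 1 := ⟨c - 1, by omega⟩
    by_cases hdm : d ≤ 2 ^ m
    · exact .inl ⟨(c, d), mem_block.2 ⟨⟨by omega, by omega, hd1, hdm⟩, hmem⟩⟩
    · obtain ⟨j, rfl⟩ : ∃ j, d = j + 2 ^ m := ⟨d - 2 ^ m, by omega⟩
      exact .inr ⟨(c, j), mem_block.2 ⟨⟨by omega, by omega, by omega, by omega⟩, hmem⟩⟩

theorem exists_root_Tvec_le_of_mem_block (h : IsStoppingSet (m + 1) ψ)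
    (hj : (1, j) ∈ block m 0 ψ ∪ block m (2 ^ m) ψ)
    (hU : (block m 0 ψ).Nonempty → Tvec m j ≤ (leafSet m (block m 0 ψ)).card)
    (hL : (block m (2 ^ m) ψ).Nonempty → Tvec m j ≤ (leafSet m (block m (2 ^ m) ψ)).card) :
    ∃ r, (1, r) ∈ ψ ∧ Tvec (m + 1) r ≤ (leafSet (m + 1) ψ).card := by
  have hvn : IsVN m 1 j := by
    rcases Finset.mem_union.1 hj with hj | hj <;> exact (mem_block.1 hj).1
  rw [card_leafSet_succ h.1]
  by_cases hx : (1, j) ∈ ψ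
  · refine ⟨j, hx, ?_⟩
    rw [Tvec, if_pos hvn.2.2.2]
    rcases Finset.mem_union.1 hj with hj | hj
    · exact (hU ⟨_, hj⟩).trans (Nat.le_add_right _ _)
    · exact (hL ⟨_, hj⟩).trans (Nat.le_add_left _ _)
  · have hboth : (1, j) ∈ block m 0 ψ ∧ (1, j) ∈ block m (2 ^ m) ψ := by
      rcases Finset.mem_union.1 hj with hj | hj
      · exact ⟨hj, (h.mem_or_mem_lower_of_mem_upper hj).resolve_left hx⟩
      · exact ⟨(h.mem_or_mem_upper_of_mem_lower hj).resolve_left hx, hj⟩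
    refine ⟨j + 2 ^ m, (h.mem_lower_iff hvn.2.2.1 hvn.2.2.2).1 hboth.2, ?_⟩
    rw [Tvec, if_neg (by have := hvn.2.2.1; omega), Nat.add_sub_cancel, two_mul]
    exact add_le_add (hU ⟨_, hboth.1⟩) (hL ⟨_, hboth.2⟩)

theorem exists_root_Tvec_le_card_leafSet :
    ∀ {n : ℕ} {ψ : Finset (ℕ × ℕ)}, IsStoppingSet n ψ → ψ.Nonempty →
      ∃ j, (1, j) ∈ ψ ∧ Tvec n j ≤ (leafSet n ψ).card
  | 0, ψ, h, ⟨v, hv⟩ => by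
    obtain ⟨hk1, hk, hi1, hi⟩ := h.1 v hv
    have hv' : v = (1, 1) := Prod.ext (by omega) (by rw [pow_zero] at hi; omega)
    subst hv'
    exact ⟨1, hv, Finset.card_pos.2 ⟨_, Finset.mem_filter.2 ⟨hv, rfl⟩⟩⟩
  | m + 1, ψ, h, hne => by
    have hU := isStoppingSet_block h (dvd_zero _) (Nat.zero_le _)
    have hL := isStoppingSet_block h dvd_rfl le_rfl
    set R := (block m 0 ψ ∪ block m (2 ^ m) ψ).filter fun v => v.1 = 1
    have hroot_mem : ∀ {φ}, φ ⊆ block m 0 ψ ∪ block m (2 ^ m) ψ → ∀ {a}, (1, a) ∈ φ →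
        (1, a) ∈ R := fun hφ _ ha => Finset.mem_filter.2 ⟨hφ ha, rfl⟩
    have hR : R.Nonempty := by
      rcases h.block_nonempty hne with hne' | hne'
      · obtain ⟨a, ha, -⟩ := hU.exists_root_Tvec_le_card_leafSet hne'
        exact ⟨_, hroot_mem Finset.subset_union_left ha⟩
      · obtain ⟨a, ha, -⟩ := hL.exists_root_Tvec_le_card_leafSet hne'
        exact ⟨_, hroot_mem Finset.subset_union_right ha⟩
    obtain ⟨⟨c, j⟩, hjR, hjmin⟩ := R.exists_min_image (fun v => Tvec m v.2) hR
    obtain ⟨hj, rfl : c = 1⟩ := Finset.mem_filter.1 hjR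
    have hbound : ∀ {φ}, φ ⊆ block m 0 ψ ∪ block m (2 ^ m) ψ → IsStoppingSet m φ →
        φ.Nonempty → Tvec m j ≤ (leafSet m φ).card := fun hφ hφs hne' => by
      obtain ⟨a, ha, hTa⟩ := hφs.exists_root_Tvec_le_card_leafSet hne'
      exact (hjmin _ (hroot_mem hφ ha)).trans hTa
    exact h.exists_root_Tvec_le_of_mem_block hj (hbound Finset.subset_union_left hU)
      (hbound Finset.subset_union_right hL)

theorem eq_empty_of_forall_not_mem (h : IsStoppingSet n ψ) (hroot : ∀ j, (1, j) ∉ ψ) : ψ = ∅ :=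
  Finset.not_nonempty_iff_eq_empty.1 fun hne =>
    let ⟨j, hj, _⟩ := h.exists_root_Tvec_le_card_leafSet hne
    hroot j hj

theorem card_leafSet_le_Tvec :
    ∀ {n i : ℕ} {ψ : Finset (ℕ × ℕ)}, IsStoppingSet n ψ → (∀ j, (1, j) ∈ ψ → j = i) →
      (leafSet n ψ).card ≤ Tvec n i
  | 0, i, ψ, _, hroot => by
    calc (leafSet 0 ψ).card ≤ ({(1, i)} : Finset (ℕ × ℕ)).card :=
          Finset.card_le_card fun ⟨a, b⟩ hv => by
            obtain ⟨hv, rfl : a = 1⟩ := Finset.mem_filter.1 hv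
            simp [hroot b hv]
      _ = Tvec 0 i := rfl
  | m + 1, i, ψ, h, hroot => by
    have hU := isStoppingSet_block h (dvd_zero _) (Nat.zero_le _)
    have hL := isStoppingSet_block h dvd_rfl le_rfl
    have hlower : ∀ {j}, (1, j) ∈ block m (2 ^ m) ψ → 1 ≤ j ∧ j ≤ 2 ^ m ∧ j + 2 ^ m = i :=
      fun hj =>
        have hvn := (mem_block.1 hj).1
        ⟨hvn.2.2.1, hvn.2.2.2, hroot _ ((h.mem_lower_iff hvn.2.2.1 hvn.2.2.2).1 hj)⟩
    rw [card_leafSet_succ h.1]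
    by_cases hi : i ≤ 2 ^ m
    · have hL0 : block m (2 ^ m) ψ = ∅ :=
        hL.eq_empty_of_forall_not_mem fun j hj => by have := hlower hj; omega
      have hupper : ∀ j, (1, j) ∈ block m 0 ψ → j = i := fun j hj =>
        (h.mem_or_mem_lower_of_mem_upper hj).elim (hroot j) fun hl => by
          have := hlower hl; omega
      rw [hL0, Tvec, if_pos hi]
      simpa [leafSet] using hU.card_leafSet_le_Tvec hupper
    · have hupper : ∀ j, (1, j) ∈ block m 0 ψ → j = i - 2 ^ m := fun j hj => by
        have hjm : j ≤ 2 ^ m := (mem_block.1 hj).1.2.2.2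
        rcases h.mem_or_mem_lower_of_mem_upper hj with hx | hl
        · have := hroot j hx; omega
        · have := hlower hl; omega
      rw [Tvec, if_neg hi, two_mul]
      exact add_le_add (hU.card_leafSet_le_Tvec hupper)
        (hL.card_leafSet_le_Tvec fun j hj => by have := hlower hj; omega)

end IsStoppingSet

theorem IsStoppingTree.mem_iff {n i j : ℕ} {ψ : Finset (ℕ × ℕ)} (h : IsStoppingTree n i ψ) :
    (1, j) ∈ ψ ↔ j = i := by
  simpa using congrArg ((1, j) ∈ ·) h.2

theorem IsStoppingTree.card_leafSet {n i : ℕ} {ψ : Finset (ℕ × ℕ)} (h : IsStoppingTree n i ψ) :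
    (leafSet n ψ).card = Tvec n i := by
  refine le_antisymm (h.1.card_leafSet_le_Tvec fun j => h.mem_iff.1) ?_
  obtain ⟨j, hj, hle⟩ := h.1.exists_root_Tvec_le_card_leafSet ⟨_, h.mem_iff.2 rfl⟩
  rwa [← h.mem_iff.1 hj]

theorem sInf_card_leafSet_eq_inf'_Tvec (n : ℕ) (A : Finset ℕ) (hA : A.Nonempty)
    (htree : ∀ i ∈ A, ∃ ψ, IsStoppingTree n i ψ) :
    sInf {m : ℕ | ∃ ψ : Finset (ℕ × ℕ), ψ.Nonempty ∧ IsStoppingSet n ψ ∧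
        (∀ j, (1, j) ∈ ψ → j ∈ A) ∧ (leafSet n ψ).card = m} = A.inf' hA (Tvec n) := by
  have htree_mem : ∀ i ∈ A, ∃ ψ : Finset (ℕ × ℕ), ψ.Nonempty ∧ IsStoppingSet n ψ ∧
      (∀ j, (1, j) ∈ ψ → j ∈ A) ∧ (leafSet n ψ).card = Tvec n i := fun i hi =>
    let ⟨ψ, hψ⟩ := htree i hi
    ⟨ψ, ⟨_, hψ.mem_iff.2 rfl⟩, hψ.1, fun j hj => hψ.mem_iff.1 hj ▸ hi, hψ.card_leafSet⟩
  obtain ⟨i₀, hi₀, hmin⟩ := A.exists_mem_eq_inf' hA (Tvec n)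
  refine le_antisymm (hmin ▸ Nat.sInf_le (htree_mem i₀ hi₀)) (le_csInf ⟨_, htree_mem i₀ hi₀⟩ ?_)
  rintro _ ⟨ψ, hne, hψ, hroots, rfl⟩
  obtain ⟨j, hj, hle⟩ := hψ.exists_root_Tvec_le_card_leafSet hne
  exact (A.inf'_le _ (hroots j hj)).trans hle

theorem min_leafSet_eq_min_stoppingTree_general (n : ℕ) (A : Finset ℕ) (hA : A.Nonempty)
    (st : ℕ → Finset (ℕ × ℕ)) (hst : ∀ i ∈ A, IsStoppingTree n i (st i)) :
    sInf {m : ℕ | ∃ ψ : Finset (ℕ × ℕ), ψ.Nonempty ∧ IsStoppingSet n ψ ∧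
        (∀ j, (1, j) ∈ ψ → j ∈ A) ∧ (leafSet n ψ).card = m} =
      A.inf' hA (fun i => (leafSet n (st i)).card) ∧
    sInf {m : ℕ | ∃ ψ : Finset (ℕ × ℕ), ψ.Nonempty ∧ IsStoppingSet n ψ ∧
        (∀ j, (1, j) ∈ ψ → j ∈ A) ∧ (leafSet n ψ).card = m} =
      A.inf' hA (fun i => Tvec n i) := by
  have hS := sInf_card_leafSet_eq_inf'_Tvec n A hA fun i hi => ⟨st i, hst i hi⟩
  rw [Finset.inf'_congr hA rfl fun i hi => (hst i hi).card_leafSet]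
  exact ⟨hS, hS⟩

/-- For an information index set `A` of a polar code of length `2^n`, the minimum
leaf-set size over all (nonempty) stopping sets of `G_{2^n}` avoiding the frozen
leftmost-column nodes equals `min_{i ∈ A} f_i^{2^n}` (the leaf-set size of the
stopping tree rooted at `v_{1,i}`); consequently the undecodable threshold equals
`min_{i ∈ A} T_{2^n}(i)`. -/
theorem min_leafSet_eq_min_stoppingTree (n : ℕ) (A : Finset ℕ) (hA : A.Nonempty)
    (hsub : A ⊆ Finset.Icc 1 (2 ^ n))
    (st : ℕ → Finset (ℕ × ℕ)) (hst : ∀ i ∈ A, IsStoppingTree n i (st i)) :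
    sInf {m : ℕ | ∃ ψ : Finset (ℕ × ℕ), ψ.Nonempty ∧ IsStoppingSet n ψ ∧
        (∀ j, (1, j) ∈ ψ → j ∈ A) ∧ (leafSet n ψ).card = m} =
      A.inf' hA (fun i => (leafSet n (st i)).card) ∧
    sInf {m : ℕ | ∃ ψ : Finset (ℕ × ℕ), ψ.Nonempty ∧ IsStoppingSet n ψ ∧
        (∀ j, (1, j) ∈ ψ → j ∈ A) ∧ (leafSet n ψ).card = m} =
      A.inf' hA (fun i => Tvec n i) :=
  min_leafSet_eq_min_stoppingTree_general n A hA st hst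
end

section
/- Let G_N be a polar factor graph produced by removing all variable nodes in the bottom Ñ − N rows (and their edges) of G_{Ñ}, where Ñ = 2^{⌈log N⌉}. Then every nonempty stopping set of G_N contains a full row of variable nodes: there exists a row index i with 1 ≤ i ≤ N such that v_{k,i} belongs to the stopping set for every column k with 1 ≤ k ≤ ⌈log N⌉ + 1. -/
/-- Neighbors of check node `c_{k,i}` in the graph `G_N` obtained by removing the
bottom `2^⌈log N⌉ - N` rows of variable nodes of `G_{2^⌈log N⌉}`. -/
def chkNbrsN (N k i : ℕ) : Finset (ℕ × ℕ) :=
  (chkNbrs (Nat.clog 2 N) k i).filter fun v => v.2 ≤ N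

/-- `c_{k,i}` is a check node of `G_N`. -/
def IsCheckN (N k i : ℕ) : Prop := 1 ≤ k ∧ k ≤ Nat.clog 2 N ∧ 1 ≤ i ∧ i ≤ N

/-- `v_{k,i}` is a variable node of `G_N`. -/
def IsVNN (N k i : ℕ) : Prop := 1 ≤ k ∧ k ≤ Nat.clog 2 N + 1 ∧ 1 ≤ i ∧ i ≤ N

/-- A stopping set of `G_N`. -/
def IsStoppingSetN (N : ℕ) (ψ : Finset (ℕ × ℕ)) : Prop :=
  (∀ v ∈ ψ, IsVNN N v.1 v.2) ∧
  ∀ k i, IsCheckN N k i → (∃ v ∈ chkNbrsN N k i, v ∈ ψ) →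
    2 ≤ ((chkNbrsN N k i) ∩ ψ).card

/-- The leaf set of a stopping set of `G_N`. -/
def leafSetN (N : ℕ) (ψ : Finset (ℕ × ℕ)) : Finset (ℕ × ℕ) :=
  ψ.filter fun v => v.1 = Nat.clog 2 N + 1

/-! Let `i` be the lowest row met by a stopping set `ψ`. The slanted neighbour of a check `c_{k,i}`
lies strictly below row `i`, hence outside `ψ`, so inside `ψ` the check sees only `v_{k,i}` and
`v_{k+1,i}`; the stopping condition then puts both in `ψ` as soon as one is, and membership
propagates along the whole row. -/

lemma mem_chkNbrs_self (n k i : ℕ) : (k, i) ∈ chkNbrs n k i := by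
  unfold chkNbrs
  split_ifs <;> simp

lemma mem_chkNbrs_succ (n k i : ℕ) : (k + 1, i) ∈ chkNbrs n k i := by
  unfold chkNbrs
  split_ifs <;> simp

lemma eq_or_eq_of_mem_chkNbrs_of_snd_le {n k i : ℕ} {v : ℕ × ℕ} (hv : v ∈ chkNbrs n k i)
    (hle : v.2 ≤ i) : v = (k, i) ∨ v = (k + 1, i) := by
  unfold chkNbrs at hv
  split_ifs at hv <;> simp only [Finset.mem_insert, Finset.mem_singleton] at hv
  · rcases hv with rfl | rfl | rfl
    · exact .inl rfl
    · exact .inr rfl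
    · have := Nat.one_le_two_pow (n := n - k)
      simp only at hle
      omega
  · exact hv

lemma Nat.iff_of_forall_iff_succ {P : ℕ → Prop} {a b : ℕ}
    (h : ∀ k, a ≤ k → k < b → (P k ↔ P (k + 1))) {j : ℕ} (haj : a ≤ j) (hjb : j ≤ b) :
    P j ↔ P a := by
  induction j, haj using Nat.le_induction with
  | base => rfl
  | succ j haj ih => exact (h j haj (by omega)).symm.trans (ih (by omega))

lemma IsStoppingSetN.mem_iff_mem_succ_of_snd_le {N i k : ℕ} {ψ : Finset (ℕ × ℕ)}
    (hψ : IsStoppingSetN N ψ) (hrow : ∀ v ∈ ψ, v.2 ≤ i) (hi : 1 ≤ i) (hiN : i ≤ N)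
    (hk : 1 ≤ k) (hkn : k ≤ Nat.clog 2 N) : (k, i) ∈ ψ ↔ (k + 1, i) ∈ ψ := by
  have hself : (k, i) ∈ chkNbrsN N k i := Finset.mem_filter.2 ⟨mem_chkNbrs_self .., hiN⟩
  have hsucc : (k + 1, i) ∈ chkNbrsN N k i := Finset.mem_filter.2 ⟨mem_chkNbrs_succ .., hiN⟩
  suffices h : (k, i) ∈ ψ ∨ (k + 1, i) ∈ ψ → (k, i) ∈ ψ ∧ (k + 1, i) ∈ ψ by tauto
  intro hor
  have hadj : ∃ v ∈ chkNbrsN N k i, v ∈ ψ := hor.elim (⟨_, hself, ·⟩) (⟨_, hsucc, ·⟩)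
  have hsub : chkNbrsN N k i ∩ ψ ⊆ {(k, i), (k + 1, i)} := fun v hv => by
    obtain ⟨hvN, hvψ⟩ := Finset.mem_inter.1 hv
    simpa using eq_or_eq_of_mem_chkNbrs_of_snd_le (Finset.mem_filter.1 hvN).1 (hrow v hvψ)
  have heq : chkNbrsN N k i ∩ ψ = {(k, i), (k + 1, i)} :=
    Finset.eq_of_subset_of_card_le hsub
      (Finset.card_le_two.trans (hψ.2 k i ⟨hk, hkn, hi, hiN⟩ hadj))
  have hpair : (k, i) ∈ chkNbrsN N k i ∩ ψ ∧ (k + 1, i) ∈ chkNbrsN N k i ∩ ψ := by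
    simp [heq]
  exact ⟨(Finset.mem_inter.1 hpair.1).2, (Finset.mem_inter.1 hpair.2).2⟩

theorem stoppingSet_contains_full_row_general (N : ℕ)
    (ψ : Finset (ℕ × ℕ)) (hne : ψ.Nonempty) (hψ : IsStoppingSetN N ψ) :
    ∃ i, 1 ≤ i ∧ i ≤ N ∧ ∀ k, 1 ≤ k → k ≤ Nat.clog 2 N + 1 → (k, i) ∈ ψ := by
  obtain ⟨v, hv, hlowest⟩ := ψ.exists_max_image Prod.snd hne
  obtain ⟨hv1, hvn, hi1, hiN⟩ := hψ.1 v hv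
  have hrow (k : ℕ) (hk1 : 1 ≤ k) (hkn : k ≤ Nat.clog 2 N + 1) : (k, v.2) ∈ ψ ↔ (1, v.2) ∈ ψ :=
    Nat.iff_of_forall_iff_succ (P := fun j => (j, v.2) ∈ ψ)
      (fun j hj1 hjn => hψ.mem_iff_mem_succ_of_snd_le hlowest hi1 hiN hj1 (by omega)) hk1 hkn
  exact ⟨v.2, hi1, hiN, fun k hk1 hkn => (hrow k hk1 hkn).2 ((hrow v.1 hv1 hvn).1 hv)⟩

/-- Every nonempty stopping set of the polar factor graph `G_N` (obtained by removing
the bottom `2^⌈log N⌉ - N` rows of `G_{2^⌈log N⌉}`) contains a full row of variable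
nodes: all columns `1 ≤ k ≤ ⌈log N⌉ + 1` of some single row `1 ≤ i ≤ N`. -/
theorem stoppingSet_contains_full_row (N : ℕ) (hN : 1 ≤ N)
    (ψ : Finset (ℕ × ℕ)) (hne : ψ.Nonempty) (hψ : IsStoppingSetN N ψ) :
    ∃ i, 1 ≤ i ∧ i ≤ N ∧ ∀ k, 1 ≤ k → k ≤ Nat.clog 2 N + 1 → (k, i) ∈ ψ :=
  stoppingSet_contains_full_row_general N ψ hne hψ
end

section
/- For a polar code of length Ñ = 2^n with frozen set F̃ and information set Â = [Ñ] \ F̃, the stopping tree ST_i rooted at v_{1,i} is itself a stopping set in Ψ^Â for every i ∈ Â; therefore min over stopping sets ψ ∈ Ψ^Â of |Leaf-Set(ψ)| ≤ min_{i ∈ Â} f_i^{Ñ}. -/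
namespace IsStoppingTree

variable {n i : ℕ} {ψ : Finset (ℕ × ℕ)}

theorem root_mem (h : IsStoppingTree n i ψ) : (1, i) ∈ ψ :=
  (Finset.mem_filter.mp (h.2 ▸ Finset.mem_singleton_self (1, i))).1

theorem eq_root_of_mem {j : ℕ} (h : IsStoppingTree n i ψ) (hj : (1, j) ∈ ψ) : j = i := by
  have : (1, j) ∈ ψ.filter (fun v => v.1 = 1) := Finset.mem_filter.mpr ⟨hj, rfl⟩
  rw [h.2, Finset.mem_singleton, Prod.mk.injEq] at this
  exact this.2

end IsStoppingTree

theorem min_leafSet_le_min_stoppingTree_general (n : ℕ) (F : Finset ℕ)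
    (hA : (Finset.Icc 1 (2 ^ n) \ F).Nonempty)
    (st : ℕ → Finset (ℕ × ℕ))
    (hst : ∀ i ∈ Finset.Icc 1 (2 ^ n) \ F, IsStoppingTree n i (st i)) :
    (∀ i ∈ Finset.Icc 1 (2 ^ n) \ F, ∀ j ∈ F, (1, j) ∉ st i) ∧
    sInf {m : ℕ | ∃ ψ : Finset (ℕ × ℕ), ψ.Nonempty ∧ IsStoppingSet n ψ ∧
        (∀ j, (1, j) ∈ ψ → j ∉ F) ∧ (leafSet n ψ).card = m} ≤
      (Finset.Icc 1 (2 ^ n) \ F).inf' hA fun i => (leafSet n (st i)).card := by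
  have avoids_frozen : ∀ i ∈ Finset.Icc 1 (2 ^ n) \ F, ∀ j, (1, j) ∈ st i → j ∉ F :=
    fun i hi j hj => (hst i hi).eq_root_of_mem hj ▸ (Finset.mem_sdiff.mp hi).2
  refine ⟨fun i hi j hjF hj => avoids_frozen i hi j hj hjF, ?_⟩
  obtain ⟨i, hi, hmin⟩ := Finset.exists_mem_eq_inf' hA fun i => (leafSet n (st i)).card
  rw [hmin]
  exact Nat.sInf_le ⟨st i, ⟨_, (hst i hi).root_mem⟩, (hst i hi).1, avoids_frozen i hi, rfl⟩

/-- For every information index `i ∈ Â = [2^n] \ F̃`, the stopping tree rooted at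
`v_{1,i}` is itself a stopping set avoiding all frozen leftmost-column nodes
(i.e., it lies in `Ψ^Â`); therefore the minimum leaf-set size over all (nonempty)
stopping sets in `Ψ^Â` is at most `min_{i ∈ Â} f_i^{2^n}`. -/
theorem min_leafSet_le_min_stoppingTree (n : ℕ) (F : Finset ℕ)
    (hF : F ⊆ Finset.Icc 1 (2 ^ n))
    (hA : (Finset.Icc 1 (2 ^ n) \ F).Nonempty)
    (st : ℕ → Finset (ℕ × ℕ))
    (hst : ∀ i ∈ Finset.Icc 1 (2 ^ n) \ F, IsStoppingTree n i (st i)) :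
    (∀ i ∈ Finset.Icc 1 (2 ^ n) \ F, ∀ j ∈ F, (1, j) ∉ st i) ∧
    sInf {m : ℕ | ∃ ψ : Finset (ℕ × ℕ), ψ.Nonempty ∧ IsStoppingSet n ψ ∧
        (∀ j, (1, j) ∈ ψ → j ∉ F) ∧ (leafSet n ψ).card = m} ≤
      (Finset.Icc 1 (2 ^ n) \ F).inf' hA fun i => (leafSet n (st i)).card :=
  min_leafSet_le_min_stoppingTree_general n F hA st hst
end
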